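/- arXiv:1803.04666 — 2 statements merged into one kernel-verified Lean document; each statement's English description precedes it below -/
import Mathlib

section
/- For every ε > 0 there is a constant c_ε > 0 such that for every α in the open unit disk with α ≠ 0, there is an arc A ⊆ 𝕋 centered at α/|α| with ∫_A |b_α'(ζ)| |dζ| > 2π − ε and with arc length |A| ≤ c_ε·(1 − |α|), where b_α(z) = (z − α)/(1 − conj(α) z). -/
/-!
On the unit circle, `|b_α'(α/|α| · e^{iθ})|` is the Poisson kernel
`P_r(θ) = (1 - r²)/(1 - 2r cos θ + r²)` with `r = |α|`. It has the explicit primitive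
`2 arctan (K tan (θ/2))` with `K = (1 + r)/(1 - r)`, so the movement of the arc `|θ| ≤ δ` is
`4 arctan (K tan (δ/2))`. Taking `tan (δ/2) = 4(1 - r)/ε` makes `K tan (δ/2) ≥ 4/ε`, and
`arctan x > π/2 - 1/x` gives movement `> 2π - ε`, while `δ ≤ 2 tan (δ/2) = 8(1 - r)/ε`.
-/

open Real

theorem Real.arctan_le_self {x : ℝ} (hx : 0 ≤ x) : arctan x ≤ x := by
  simpa using le_tan (arctan_nonneg.mpr hx) (arctan_lt_pi_div_two x)

theorem Real.pi_div_two_sub_inv_lt_arctan {x : ℝ} (hx : 0 < x) : π / 2 - x⁻¹ < arctan x := by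
  have h := lt_tan (arctan_pos.mpr (inv_pos.mpr hx)) (arctan_lt_pi_div_two _)
  rw [tan_arctan, arctan_inv_of_pos hx] at h
  linarith

theorem one_sub_two_mul_mul_cos_add_sq_pos {r : ℝ} (hr : |r| < 1) (θ : ℝ) :
    0 < 1 - 2 * r * cos θ + r ^ 2 := by
  have h : |r * cos θ| ≤ |r| := by
    rw [abs_mul]; exact mul_le_of_le_one_right (abs_nonneg r) (abs_cos_le_one θ)
  nlinarith [le_abs_self (r * cos θ), abs_nonneg r, sq_abs r]

theorem hasDerivAt_two_mul_arctan_mul_tan_half {r θ : ℝ} (hr : |r| < 1) (hθ : |θ| < π) :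
    HasDerivAt (fun t => 2 * arctan ((1 + r) / (1 - r) * tan (t / 2)))
      ((1 - r ^ 2) / (1 - 2 * r * cos θ + r ^ 2)) θ := by
  obtain ⟨hr₁, hr₂⟩ := abs_lt.mp hr
  obtain ⟨hθ₁, hθ₂⟩ := abs_lt.mp hθ
  have hc : 0 < cos (θ / 2) := cos_pos_of_mem_Ioo ⟨by linarith, by linarith⟩
  have htan : HasDerivAt (fun t => tan (t / 2)) (1 / cos (θ / 2) ^ 2 * (1 / 2)) θ :=
    (hasDerivAt_tan hc.ne').comp (h := fun t => t / 2) θ ((hasDerivAt_id' θ).div_const 2)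
  refine ((htan.const_mul _).arctan.const_mul 2).congr_deriv ?_
  have hcos : cos θ = 2 * cos (θ / 2) ^ 2 - 1 := by
    rw [← cos_two_mul, mul_div_cancel₀ _ two_ne_zero]
  have hden := one_sub_two_mul_mul_cos_add_sq_pos hr θ
  rw [hcos] at hden ⊢
  rw [tan_eq_sin_div_cos]
  have h1r : 1 - r ≠ 0 := by linarith
  field_simp
  linear_combination -((1 - r) * (1 + r) ^ 3) * sin_sq_add_cos_sq (θ / 2)

theorem integral_poisson_eq_four_mul_arctan {r δ : ℝ} (hr : |r| < 1) (hδ : |δ| < π) :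
    ∫ θ in (-δ)..δ, (1 - r ^ 2) / (1 - 2 * r * cos θ + r ^ 2)
      = 4 * arctan ((1 + r) / (1 - r) * tan (δ / 2)) := by
  have hcont : Continuous fun θ => (1 - r ^ 2) / (1 - 2 * r * cos θ + r ^ 2) :=
    continuous_const.div (by fun_prop) fun θ => (one_sub_two_mul_mul_cos_add_sq_pos hr θ).ne'
  have hderiv : ∀ θ ∈ Set.uIcc (-δ) δ,
      HasDerivAt (fun t => 2 * arctan ((1 + r) / (1 - r) * tan (t / 2)))
        ((1 - r ^ 2) / (1 - 2 * r * cos θ + r ^ 2)) θ := by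
    intro θ hθ
    refine hasDerivAt_two_mul_arctan_mul_tan_half hr (lt_of_le_of_lt ?_ hδ)
    have := le_abs_self δ
    have := neg_le_abs δ
    rcases Set.mem_uIcc.mp hθ with h | h <;> exact abs_le.mpr ⟨by linarith, by linarith⟩
  rw [intervalIntegral.integral_eq_sub_of_hasDerivAt hderiv (hcont.intervalIntegrable _ _),
    neg_div, tan_neg, mul_neg, arctan_neg]
  ring

section

open Complex ComplexConjugate

theorem hasDerivAt_blaschke {α z : ℂ} (hz : 1 - conj α * z ≠ 0) :
    HasDerivAt (fun z => (z - α) / (1 - conj α * z))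
      ((1 - conj α * α) / (1 - conj α * z) ^ 2) z :=
  (((hasDerivAt_id' z).sub_const α).div
    (((hasDerivAt_id' z).const_mul (conj α)).const_sub 1) hz).congr_deriv (by ring)

theorem sq_norm_one_sub_ofReal_mul_exp (r θ : ℝ) :
    ‖1 - r * exp (θ * I)‖ ^ 2 = 1 - 2 * r * Real.cos θ + r ^ 2 := by
  rw [Complex.sq_norm, normSq_apply]
  simp only [sub_re, sub_im, one_re, one_im, re_ofReal_mul, im_ofReal_mul,
    exp_ofReal_mul_I_re, exp_ofReal_mul_I_im]
  nlinarith [Real.sin_sq_add_cos_sq θ]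

theorem conj_mul_div_norm_mul_exp {α : ℂ} (hα : α ≠ 0) (θ : ℝ) :
    conj α * (α / ‖α‖ * exp (θ * I)) = ‖α‖ * exp (θ * I) := by
  have : (‖α‖ : ℂ) ≠ 0 := by simpa using hα
  rw [← mul_assoc, mul_div_assoc', conj_mul', sq, mul_div_cancel_right₀ _ this]

theorem norm_deriv_blaschke_div_norm_mul_exp {α : ℂ} (hα : ‖α‖ < 1) (hα0 : α ≠ 0)
    (θ : ℝ) :
    ‖deriv (fun z => (z - α) / (1 - conj α * z)) (α / ‖α‖ * exp (θ * I))‖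
      = (1 - ‖α‖ ^ 2) / (1 - 2 * ‖α‖ * Real.cos θ + ‖α‖ ^ 2) := by
  have hden : ‖1 - conj α * (α / ‖α‖ * exp (θ * I))‖ ^ 2
      = 1 - 2 * ‖α‖ * Real.cos θ + ‖α‖ ^ 2 := by
    rw [conj_mul_div_norm_mul_exp hα0, sq_norm_one_sub_ofReal_mul_exp]
  have hne : 1 - conj α * (α / ‖α‖ * exp (θ * I)) ≠ 0 := by
    intro h
    rw [h, norm_zero, zero_pow two_ne_zero] at hden
    exact (one_sub_two_mul_mul_cos_add_sq_pos (by rwa [abs_norm]) θ).ne hden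
  have hnum : 1 - conj α * α = ((1 - ‖α‖ ^ 2 : ℝ) : ℂ) := by push_cast [conj_mul']; rfl
  rw [(hasDerivAt_blaschke hne).deriv, norm_div, norm_pow, hden, hnum, norm_real,
    Real.norm_of_nonneg (by nlinarith [norm_nonneg α])]

end

/-- For every `ε > 0` there is `c_ε > 0` so that for every `α` in the punctured open unit disk
there is an arc of `𝕋` centered at `α/|α|` (of angular half-width `δ`) whose movement under
`b_α` exceeds `2π - ε` and whose length `2δ` is at most `c_ε (1 - |α|)`. -/
theorem blaschke_concentration_arc :
    ∀ ε : ℝ, 0 < ε → ∃ c : ℝ, 0 < c ∧ ∀ α : ℂ, ‖α‖ < 1 → α ≠ 0 →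
      ∃ δ : ℝ, 0 < δ ∧ δ ≤ Real.pi ∧
        (2 * Real.pi - ε <
          ∫ θ in (-δ)..δ,
            ‖deriv (fun z => (z - α) / (1 - (starRingEnd ℂ) α * z))
              ((α / ((‖α‖ : ℝ) : ℂ)) * Complex.exp (θ * Complex.I))‖) ∧
        2 * δ ≤ c * (1 - ‖α‖) := by
  intro ε hε
  refine ⟨16 / ε, by positivity, fun α hα hα0 => ?_⟩
  set r := ‖α‖
  have hr : |r| < 1 := by rwa [abs_norm]
  set y := 4 * (1 - r) / ε
  have hy : 0 < y := div_pos (by linarith) hε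
  have hδ : |2 * arctan y| < π := by
    rw [abs_of_pos (by positivity)]; linarith [arctan_lt_pi_div_two y]
  refine ⟨2 * arctan y, by positivity, (le_abs_self _).trans hδ.le, ?_, ?_⟩
  · rw [intervalIntegral.integral_congr
        fun θ _ => norm_deriv_blaschke_div_norm_mul_exp hα hα0 θ,
      integral_poisson_eq_four_mul_arctan hr hδ, mul_div_cancel_left₀ _ two_ne_zero, tan_arctan]
    have hKy : (1 + r) / (1 - r) * y = (1 + r) * (4 / ε) := by
      simp only [y]; field_simp [show 1 - r ≠ 0 by linarith]
    rw [hKy]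
    calc 2 * π - ε = 4 * (π / 2 - (4 / ε)⁻¹) := by field_simp; ring
      _ < 4 * arctan (4 / ε) := by gcongr; exact pi_div_two_sub_inv_lt_arctan (by positivity)
      _ ≤ 4 * arctan ((1 + r) * (4 / ε)) := by
        gcongr; exact le_mul_of_one_le_left (by positivity) (by linarith [norm_nonneg α])
  · calc 2 * (2 * arctan y) ≤ 4 * y := by linarith [arctan_le_self hy.le]
      _ = 16 / ε * (1 - r) := by ring
end

section
/- Let f be analytic in a neighborhood of 0 in ℂ with f(0) = 0 and f'(0) ≠ 0, and let g be analytic near 0 with g(0) = 0, g'(0) ≠ 0, f ≢ g. Suppose the smallest positive integer K with f^{(K)}(0) ≠ g^{(K)}(0) satisfies K ≥ 2, and let f^{-1}, g^{-1} denote the local analytic inverses at 0. Then K is also the smallest positive integer with (f^{-1})^{(K)}(0) ≠ (g^{-1})^{(K)}(0); i.e., order of contact of two analytic curves through a point, both with nonzero linear term, is preserved under inversion (swapping the roles of the two coordinates). -/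
/-!
Since `f ∘ finv = id = g ∘ ginv` near `0`, we have `(f - g) ∘ finv = g ∘ ginv - g ∘ finv` there.
The left side vanishes to order `K` at `0` because `finv' 0 ≠ 0`, and since `g' 0 ≠ 0` the strict
differentiability of `g` makes the right side `Θ(ginv - finv)`. The analytic order only depends on
the `Θ`-class of a function (`n ≤ ord h ↔ h = O((z - z₀) ^ n)`), so `finv - ginv` vanishes to order
exactly `K`, which is the claim in terms of Taylor coefficients.
-/

open Filter Asymptotics Topology

section AnalyticOrder

variable {𝕜 E F : Type*} [NontriviallyNormedField 𝕜] [NormedAddCommGroup E] [NormedSpace 𝕜 E]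
  [NormedAddCommGroup F] [NormedSpace 𝕜 F] {z₀ : 𝕜}

theorem natCast_le_analyticOrderAt_iff_isBigO {f : 𝕜 → E} (hf : AnalyticAt 𝕜 f z₀) {n : ℕ} :
    n ≤ analyticOrderAt f z₀ ↔ f =O[𝓝 z₀] fun z ↦ (z - z₀) ^ n := by
  constructor
  · intro hn
    obtain ⟨g, hg, hfg⟩ := (natCast_le_analyticOrderAt hf).1 hn
    refine ((isBigO_refl (fun z ↦ (z - z₀) ^ n) _).smul
      (hg.continuousAt.isBigO_one 𝕜)).congr'
      (hfg.mono fun z hz ↦ hz.symm) (Eventually.of_forall fun z ↦ ?_)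
    simp
  · intro hO
    by_contra! hlt
    obtain ⟨m, hm⟩ := ENat.ne_top_iff_exists.1 (hlt.trans (ENat.natCast_lt_top n)).ne
    have hmn : m < n := by exact_mod_cast hm ▸ hlt
    obtain ⟨g, hg, hg0, hfg⟩ := hf.analyticOrderAt_eq_natCast.1 hm.symm
    -- dividing by `(z - z₀) ^ m` off `z₀` shows that `g` vanishes at `z₀`
    have hgO : g =O[𝓝[≠] z₀] fun z ↦ (z - z₀) ^ (n - m) := by
      refine ((isBigO_refl (fun z ↦ ((z - z₀) ^ m)⁻¹) _).smul
        (hO.mono nhdsWithin_le_nhds)).congr' ?_ ?_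
      · filter_upwards [hfg.filter_mono nhdsWithin_le_nhds, self_mem_nhdsWithin] with z hz hz₀
        rw [hz, inv_smul_smul₀ (pow_ne_zero _ (sub_ne_zero.2 hz₀))]
      · filter_upwards [self_mem_nhdsWithin] with z hz₀
        rw [smul_eq_mul, mul_comm, ← pow_sub₀ _ (sub_ne_zero.2 hz₀) hmn.le]
    have hg_lim : Tendsto g (𝓝[≠] z₀) (𝓝 0) := by
      refine hgO.trans_tendsto (tendsto_nhdsWithin_of_tendsto_nhds ?_)
      have hcont : Continuous fun z : 𝕜 ↦ (z - z₀) ^ (n - m) := by fun_prop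
      simpa [zero_pow (Nat.sub_ne_zero_of_lt hmn)] using hcont.tendsto z₀
    exact hg0 (tendsto_nhds_unique (hg.continuousAt.tendsto.mono_left nhdsWithin_le_nhds) hg_lim)

theorem analyticOrderAt_eq_of_isTheta {f : 𝕜 → E} {g : 𝕜 → F} (hf : AnalyticAt 𝕜 f z₀)
    (hg : AnalyticAt 𝕜 g z₀) (hfg : f =Θ[𝓝 z₀] g) :
    analyticOrderAt f z₀ = analyticOrderAt g z₀ :=
  ENat.eq_of_forall_natCast_le_iff fun n ↦ by
    rw [natCast_le_analyticOrderAt_iff_isBigO hf, natCast_le_analyticOrderAt_iff_isBigO hg,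
      hfg.isBigO_congr_left]

theorem analyticOrderAt_sub_eq_natCast_iff [CharZero 𝕜] [CompleteSpace E] {f g : 𝕜 → E}
    (hf : AnalyticAt 𝕜 f z₀) (hg : AnalyticAt 𝕜 g z₀) (hfg : f z₀ = g z₀) {K : ℕ} :
    analyticOrderAt (f - g) z₀ = K ↔ iteratedDeriv K f z₀ ≠ iteratedDeriv K g z₀ ∧
      ∀ j : ℕ, 0 < j → j < K → iteratedDeriv j f z₀ = iteratedDeriv j g z₀ := by
  simp only [analyticOrderAt_eq_nat_iff_iteratedDeriv_eq_zero (hf.sub hg),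
    iteratedDeriv_sub hf.contDiffAt hg.contDiffAt, sub_eq_zero, ne_eq]
  refine ⟨fun ⟨hlow, hK⟩ ↦ ⟨hK, fun j _ hj ↦ hlow j hj⟩, fun ⟨hK, hlow⟩ ↦ ⟨fun j hj ↦ ?_, hK⟩⟩
  rcases j.eq_zero_or_pos with rfl | hj₀
  · simpa using hfg
  · exact hlow j hj₀ hj

end AnalyticOrder

theorem HasStrictDerivAt.isTheta_comp_sub_comp {𝕜 F α : Type*} [NontriviallyNormedField 𝕜]
    [NormedAddCommGroup F] [NormedSpace 𝕜 F] {g : 𝕜 → F} {e : F} {x : 𝕜}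
    (hg : HasStrictDerivAt g e x) (he : e ≠ 0) {l : Filter α} {a b : α → 𝕜}
    (ha : Tendsto a l (𝓝 x)) (hb : Tendsto b l (𝓝 x)) :
    (fun t ↦ g (a t) - g (b t)) =Θ[l] fun t ↦ a t - b t :=
  have hab : Tendsto (fun t ↦ (a t, b t)) l (𝓝 (x, x)) := ha.prodMk_nhds hb
  ⟨(HasDerivAtFilter.isTheta_sub hg he).1.comp_tendsto hab,
    (HasDerivAtFilter.isTheta_sub hg he).2.comp_tendsto hab⟩

theorem deriv_ne_zero_of_comp_eventuallyEq_id {𝕜 : Type*} [NontriviallyNormedField 𝕜]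
    {f φ : 𝕜 → 𝕜} {x : 𝕜} (hf : DifferentiableAt 𝕜 f (φ x)) (hφ : DifferentiableAt 𝕜 φ x)
    (hfφ : f ∘ φ =ᶠ[𝓝 x] id) : deriv φ x ≠ 0 := by
  intro h0
  have hchain := deriv_comp x hf hφ
  rw [hfφ.deriv_eq, deriv_id, h0, mul_zero] at hchain
  exact one_ne_zero hchain

theorem contact_order_of_inverses_general (f g finv ginv : ℂ → ℂ)
    (hf : AnalyticAt ℂ f 0) (hg : AnalyticAt ℂ g 0)
    (hf0 : f 0 = 0) (hg0 : g 0 = 0)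
    (hg' : deriv g 0 ≠ 0)
    (K : ℕ)
    (hKd : iteratedDeriv K f 0 ≠ iteratedDeriv K g 0)
    (hmin : ∀ j : ℕ, 0 < j → j < K → iteratedDeriv j f 0 = iteratedDeriv j g 0)
    (hfinv : AnalyticAt ℂ finv 0) (hginv : AnalyticAt ℂ ginv 0)
    (hfinv0 : finv 0 = 0) (hginv0 : ginv 0 = 0)
    (hfr : ∀ᶠ w in nhds (0 : ℂ), f (finv w) = w)
    (hgr : ∀ᶠ w in nhds (0 : ℂ), g (ginv w) = w) :
    iteratedDeriv K finv 0 ≠ iteratedDeriv K ginv 0 ∧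
      ∀ j : ℕ, 0 < j → j < K → iteratedDeriv j finv 0 = iteratedDeriv j ginv 0 := by
  have hf_finv : AnalyticAt ℂ f (finv 0) := by rwa [hfinv0]
  have hg_finv : AnalyticAt ℂ g (finv 0) := by rwa [hfinv0]
  have hg_ginv : AnalyticAt ℂ g (ginv 0) := by rwa [hginv0]
  have hfinv' : deriv finv 0 ≠ 0 :=
    deriv_ne_zero_of_comp_eventuallyEq_id hf_finv.differentiableAt hfinv.differentiableAt hfr
  have hcontact : analyticOrderAt (f - g) 0 = K :=
    (analyticOrderAt_sub_eq_natCast_iff hf hg (hf0.trans hg0.symm)).2 ⟨hKd, hmin⟩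
  -- both sides equal `w - g (finv w)`
  have hswap : (f - g) ∘ finv =ᶠ[𝓝 0] g ∘ ginv - g ∘ finv := by
    filter_upwards [hfr, hgr] with w hfw hgw
    simp [hfw, hgw]
  have hginv_lim : Tendsto ginv (𝓝 0) (𝓝 0) := by simpa [hginv0] using hginv.continuousAt.tendsto
  have hfinv_lim : Tendsto finv (𝓝 0) (𝓝 0) := by simpa [hfinv0] using hfinv.continuousAt.tendsto
  have htheta : (g ∘ ginv - g ∘ finv) =Θ[𝓝 0] (ginv - finv) :=
    hg.hasStrictDerivAt.isTheta_comp_sub_comp hg' hginv_lim hfinv_lim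
  have horder : analyticOrderAt (finv - ginv) 0 = K := by
    rw [← neg_sub, analyticOrderAt_neg, ← analyticOrderAt_eq_of_isTheta
      ((hg_ginv.comp hginv).sub (hg_finv.comp hfinv)) (hginv.sub hfinv) htheta,
      ← analyticOrderAt_congr hswap, analyticOrderAt_comp_of_deriv_ne_zero hfinv hfinv', hfinv0,
      hcontact]
  exact (analyticOrderAt_sub_eq_natCast_iff hfinv hginv (hfinv0.trans hginv0.symm)).1 horder

/-- Order of contact of two analytic curves through `0` with nonvanishing linear term is
preserved under taking local inverses: if `K ≥ 2` is the smallest positive integer with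
`f^{(K)}(0) ≠ g^{(K)}(0)`, the same holds for the local inverses `f⁻¹, g⁻¹` at `0`. -/
theorem contact_order_of_inverses (f g finv ginv : ℂ → ℂ)
    (hf : AnalyticAt ℂ f 0) (hg : AnalyticAt ℂ g 0)
    (hf0 : f 0 = 0) (hg0 : g 0 = 0)
    (hf' : deriv f 0 ≠ 0) (hg' : deriv g 0 ≠ 0)
    (K : ℕ) (hK : 2 ≤ K)
    (hKd : iteratedDeriv K f 0 ≠ iteratedDeriv K g 0)
    (hmin : ∀ j : ℕ, 0 < j → j < K → iteratedDeriv j f 0 = iteratedDeriv j g 0)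
    (hfinv : AnalyticAt ℂ finv 0) (hginv : AnalyticAt ℂ ginv 0)
    (hfinv0 : finv 0 = 0) (hginv0 : ginv 0 = 0)
    (hfr : ∀ᶠ w in nhds (0 : ℂ), f (finv w) = w)
    (hgr : ∀ᶠ w in nhds (0 : ℂ), g (ginv w) = w) :
    iteratedDeriv K finv 0 ≠ iteratedDeriv K ginv 0 ∧
      ∀ j : ℕ, 0 < j → j < K → iteratedDeriv j finv 0 = iteratedDeriv j ginv 0 :=
  contact_order_of_inverses_general f g finv ginv hf hg hf0 hg0 hg' K hKd hmin hfinv hginv hfinv0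
    hginv0 hfr hgr
end
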